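/- arXiv:0906.2915 — 4 statements merged into one kernel-verified Lean document; each statement's English description precedes it below -/
import Mathlib

section
/- Let 𝔛 be a Banach space and let 𝖠 ⊆ B(𝔛) be precompact and nonempty. Then ρ_χ(𝖠) = ρ_f(𝖠). -/
open Filter Topology MeasureTheory

noncomputable section

variable {𝕏 : Type*} [NormedAddCommGroup 𝕏] [NormedSpace ℝ 𝕏] [CompleteSpace 𝕏]

/-- The spectral radius `ρ(A) = lim_k ‖A^k‖^{1/k}` (Gelfand limit). -/
def specRad {R : Type*} [NormedRing R] (A : R) : ℝ :=
  Filter.atTop.limsup fun k : ℕ => ‖A ^ k‖ ^ (1 / (k : ℝ))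

/-- The set `𝖠ⁿ` of all products of `n` elements of `A`. -/
def prods {R : Type*} [NormedRing R] (A : Set R) (n : ℕ) : Set R :=
  {P | ∃ f : Fin n → R, (∀ i, f i ∈ A) ∧ P = (List.ofFn f).prod}

/-- The Hausdorff measure of noncompactness `‖L‖_χ` of a bounded operator: the infimum of all
`ε > 0` such that the image of the unit ball under `L` admits a finite `ε`-net. -/
def hmnc (L : 𝕏 →L[ℝ] 𝕏) : ℝ :=
  sInf {ε : ℝ | 0 < ε ∧ ∃ S : Finset 𝕏,
    L '' Metric.closedBall 0 1 ⊆ ⋃ y ∈ S, Metric.ball y ε}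

/-- `‖L‖_f`: the distance from `L` to the finite-rank operators. -/
def fdist (L : 𝕏 →L[ℝ] 𝕏) : ℝ :=
  sInf {c : ℝ | ∃ K : 𝕏 →L[ℝ] 𝕏,
    FiniteDimensional ℝ (LinearMap.range (K : 𝕏 →ₗ[ℝ] 𝕏)) ∧ c = ‖L - K‖}

/-!
Since `‖L‖_χ ≤ ‖L‖_f`, the inequality `ρ_χ ≤ ρ_f` is immediate. Conversely, let `ρ_χ < s < t`. For
some `m`, every product `Q ∈ 𝖠ᵐ` has `‖Q‖_χ < sᵐ`, and since the closure of `𝖠ᵐ` is compact, a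
single finite set `Y` is a `tᵐ`-net of the image of the unit ball under every such `Q`. By
induction, the image of the unit ball under a product of `n` elements of `𝖠ᵐ` lies within `tᵐⁿ` of
the span of at most `n |Y|` vectors. An Auerbach basis gives a projection onto that span whose norm
is at most its dimension, so `‖P‖_f ≤ (1 + n |Y|) tᵐⁿ`, and the polynomial factor disappears under
the `mn`-th root.
-/

section Auerbach

variable {W : Type*} [NormedAddCommGroup W] [NormedSpace ℝ W]

theorem Module.Basis.abs_det_update_le {ι : Type*} [Fintype ι] [DecidableEq ι]
    (b : Module.Basis ι ℝ W) {e : ι → W} (he : ∀ i, ‖e i‖ = 1)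
    (hmax : ∀ v : ι → W, (∀ i, ‖v i‖ = 1) → |b.det v| ≤ |b.det e|) (i : ι) (x : W) :
    |b.det (Function.update e i x)| ≤ ‖x‖ * |b.det e| := by
  rcases eq_or_ne x 0 with rfl | hx
  · simp [AlternatingMap.map_update_zero]
  have hunit : ∀ j, ‖Function.update e i (‖x‖⁻¹ • x) j‖ = 1 := by
    intro j
    rcases eq_or_ne j i with rfl | hj
    · simpa using norm_smul_inv_norm (𝕜 := ℝ) hx
    · simpa [hj] using he j
  calc |b.det (Function.update e i x)|
      = ‖x‖ * |b.det (Function.update e i (‖x‖⁻¹ • x))| := by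
        conv_lhs => rw [← smul_inv_smul₀ (norm_ne_zero_iff.2 hx) x]
        rw [AlternatingMap.map_update_smul, smul_eq_mul, abs_mul, abs_norm]
    _ ≤ ‖x‖ * |b.det e| := mul_le_mul_of_nonneg_left (hmax _ hunit) (norm_nonneg x)

theorem Module.Basis.continuous_det [FiniteDimensional ℝ W] {ι : Type*} [Fintype ι]
    [DecidableEq ι] (b : Module.Basis ι ℝ W) : Continuous fun v : ι → W => b.det v := by
  simp_rw [b.det_apply]
  exact Continuous.matrix_det <| continuous_matrix fun i j =>
    (b.coord i).continuous_of_finiteDimensional.comp (continuous_apply j)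

/-- Auerbach's lemma: a family of unit vectors maximizing `|det|` is a basis, and by Cramer's rule
its coordinate functionals have norm at most `1`. -/
theorem exists_basis_norm_eq_one_abs_repr_le [FiniteDimensional ℝ W] :
    ∃ b : Module.Basis (Fin (Module.finrank ℝ W)) ℝ W,
      (∀ i, ‖b i‖ = 1) ∧ ∀ x i, |b.repr x i| ≤ ‖x‖ := by
  classical
  set b₀ := Module.finBasis ℝ W
  set D : Set (Fin (Module.finrank ℝ W) → W) := Set.univ.pi fun _ => Metric.sphere 0 1
  have hD : ∀ v, v ∈ D ↔ ∀ i, ‖v i‖ = 1 := by simp [D]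
  set u := fun i => ‖b₀ i‖⁻¹ • b₀ i
  have hu : ∀ i, ‖u i‖ = 1 := fun i => norm_smul_inv_norm (𝕜 := ℝ) (b₀.ne_zero i)
  obtain ⟨e, heD, hmax⟩ := (isCompact_univ_pi fun _ => isCompact_sphere (0 : W) 1).exists_isMaxOn
    ⟨u, (hD u).2 hu⟩ b₀.continuous_det.abs.continuousOn
  have he := (hD e).1 heD
  have hmax' : ∀ v, (∀ i, ‖v i‖ = 1) → |b₀.det v| ≤ |b₀.det e| := fun v hv => hmax ((hD v).2 hv)
  have hdet : b₀.det e ≠ 0 := by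
    have hu_det : b₀.det u = ∏ i, ‖b₀ i‖⁻¹ := by
      simp [u, AlternatingMap.map_smul_univ, Module.Basis.det_self]
    have : 0 < |b₀.det u| := by
      rw [hu_det, abs_pos]
      exact Finset.prod_ne_zero_iff.2 fun i _ => inv_ne_zero (norm_ne_zero_iff.2 (b₀.ne_zero i))
    exact abs_pos.1 (this.trans_le (hmax' u hu))
  obtain ⟨hli, hsp⟩ := b₀.is_basis_iff_det.2 (isUnit_iff_ne_zero.2 hdet)
  set b := Module.Basis.mk hli hsp.ge
  refine ⟨b, fun i => by simpa [b] using he i, fun x i => ?_⟩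
  have hcramer : b₀.det e * b.repr x i = b₀.det (Function.update e i x) := by
    have := LinearMap.congr_fun (b₀.det_smul_mk_coord_eq_det_update hli hsp.ge i) x
    rwa [LinearMap.smul_apply, Module.Basis.coord_apply, smul_eq_mul,
      MultilinearMap.toLinearMap_apply] at this
  have := b₀.abs_det_update_le he hmax' i x
  rw [← hcramer, abs_mul, mul_comm] at this
  exact le_of_mul_le_mul_right this (abs_pos.2 hdet)

end Auerbach

theorem Submodule.exists_projection_norm_le_finrank {E : Type*} [NormedAddCommGroup E]
    [NormedSpace ℝ E] (W : Submodule ℝ E) [FiniteDimensional ℝ W] :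
    ∃ p : E →L[ℝ] W, (∀ w : W, p w = w) ∧ ‖p‖ ≤ Module.finrank ℝ W := by
  obtain ⟨b, hb, hrepr⟩ := exists_basis_norm_eq_one_abs_repr_le (W := W)
  have hcoord : ∀ i, ∃ g : StrongDual ℝ E, (∀ w : W, g w = b.repr w i) ∧ ‖g‖ ≤ 1 := fun i => by
    obtain ⟨g, hg, hgn⟩ := exists_extension_norm_eq W
      ((b.coord i).mkContinuous 1 fun x => by simpa using hrepr x i)
    exact ⟨g, hg, hgn ▸ LinearMap.mkContinuous_norm_le _ zero_le_one _⟩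
  choose g hg hgn using hcoord
  set p : E →L[ℝ] W := ∑ i, (g i).smulRight (b i)
  have hnorm : ∀ i, ‖(g i).smulRight (b i)‖ ≤ 1 := fun i => by
    rw [ContinuousLinearMap.norm_smulRight_apply, hb, mul_one]
    exact hgn i
  refine ⟨p, fun w => ?_, ?_⟩
  · simp [p, hg, b.sum_repr]
  · calc ‖p‖ ≤ ∑ i, ‖(g i).smulRight (b i)‖ := norm_sum_le _ fun i => (g i).smulRight (b i)
      _ ≤ ∑ _i : Fin (Module.finrank ℝ W), (1 : ℝ) := Finset.sum_le_sum fun i _ => hnorm i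
      _ = Module.finrank ℝ W := by simp

theorem sSup_image_le_sSup_image {α : Type*} {S : Set α} {u v : α → ℝ} (hv : BddAbove (v '' S))
    (huv : ∀ a ∈ S, u a ≤ v a) : sSup (u '' S) ≤ sSup (v '' S) := by
  rcases S.eq_empty_or_nonempty with rfl | hS
  · simp
  refine csSup_le (hS.image u) ?_
  rintro _ ⟨a, ha, rfl⟩
  exact (huv a ha).trans (le_csSup hv ⟨a, ha, rfl⟩)

theorem tendsto_mul_natCast_rpow_one_div {C : ℝ} (hC : 0 < C) :
    Tendsto (fun k : ℕ => (C * k) ^ (1 / (k : ℝ))) atTop (𝓝 1) := by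
  have hconst : Tendsto (fun k : ℕ => C ^ (1 / (k : ℝ))) atTop (𝓝 1) := by
    simpa using tendsto_const_nhds.rpow (tendsto_const_div_atTop_nhds_zero_nat 1) (Or.inl hC.ne')
  have hroot : Tendsto (fun k : ℕ => (k : ℝ) ^ (1 / (k : ℝ))) atTop (𝓝 1) :=
    tendsto_rpow_div.comp tendsto_natCast_atTop_atTop
  simpa using (hconst.mul hroot).congr fun k => (Real.mul_rpow hC.le k.cast_nonneg).symm

section Products

variable {R : Type*} [NormedRing R] {A : Set R}

theorem prods_zero : prods A 0 = {1} := by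
  ext P
  simp [prods]

theorem mem_prods_succ {n : ℕ} {P : R} :
    P ∈ prods A (n + 1) ↔ ∃ Q ∈ A, ∃ P' ∈ prods A n, P = Q * P' := by
  simp only [prods, Set.mem_ofPred_eq, Fin.exists_fin_succ_pi, Fin.forall_fin_succ, Fin.cons_zero,
    Fin.cons_succ, List.ofFn_succ, List.prod_cons]
  constructor
  · rintro ⟨Q, f, ⟨hQ, hf⟩, rfl⟩
    exact ⟨Q, hQ, _, ⟨f, hf, rfl⟩, rfl⟩
  · rintro ⟨Q, hQ, _, ⟨f, hf, rfl⟩, rfl⟩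
    exact ⟨Q, f, ⟨hQ, hf⟩, rfl⟩

theorem mem_prods_add {k l : ℕ} {P : R} (hP : P ∈ prods A (k + l)) :
    ∃ Q ∈ prods A k, ∃ Q' ∈ prods A l, P = Q * Q' := by
  obtain ⟨f, hf, rfl⟩ := hP
  exact ⟨_, ⟨_, fun i => hf _, rfl⟩, _, ⟨_, fun i => hf _, rfl⟩, by
    rw [List.ofFn_add, List.prod_append]⟩

theorem prods_mul_subset_prods_prods (m n : ℕ) : prods A (n * m) ⊆ prods (prods A m) n := by
  induction n with
  | zero => simp [prods_zero]
  | succ n ih =>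
    intro P hP
    rw [Nat.succ_mul, add_comm] at hP
    obtain ⟨Q, hQ, Q', hQ', rfl⟩ := mem_prods_add hP
    exact mem_prods_succ.2 ⟨Q, hQ, Q', ih hQ', rfl⟩

theorem IsCompact.closure_prods (hA : IsCompact (closure A)) (n : ℕ) :
    IsCompact (closure (prods A n)) := by
  induction n with
  | zero => simp [prods_zero]
  | succ n ih =>
    refine ((hA.prod ih).image continuous_mul).closure_of_subset ?_
    intro P hP
    obtain ⟨Q, hQ, P', hP', rfl⟩ := mem_prods_succ.1 hP
    exact ⟨(Q, P'), ⟨subset_closure hQ, subset_closure hP'⟩, rfl⟩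

theorem bddAbove_image_rpow_prods (hA : IsCompact (closure A)) {g : R → ℝ}
    (hg₀ : ∀ P, 0 ≤ g P) (hg : ∀ P, g P ≤ ‖P‖) (n : ℕ) :
    BddAbove ((fun P => g P ^ (1 / (n : ℝ))) '' prods A n) := by
  obtain ⟨C, hC⟩ := (hA.closure_prods n).isBounded.exists_norm_le
  refine ⟨max 1 C, ?_⟩
  rintro _ ⟨P, hP, rfl⟩
  have hgC : g P ≤ C := (hg P).trans (hC P (subset_closure hP))
  rcases le_total (g P) 1 with h1 | h1
  · exact (Real.rpow_le_one (hg₀ P) h1 (by positivity)).trans (le_max_left _ _)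
  · calc g P ^ (1 / (n : ℝ)) ≤ g P ^ (1 : ℝ) :=
          Real.rpow_le_rpow_of_exponent_le h1 (by simpa using Nat.cast_inv_le_one n)
      _ ≤ max 1 C := by simpa using Or.inr hgC

theorem nonneg_of_tendsto_sSup_image_rpow {g : R → ℝ} (hg : ∀ P, 0 ≤ g P) {ρ : ℝ}
    (h : Tendsto (fun n : ℕ => sSup ((fun P => g P ^ (1 / (n : ℝ))) '' prods A n)) atTop (𝓝 ρ)) :
    0 ≤ ρ :=
  ge_of_tendsto' h fun _ => Real.sSup_nonneg <| by
    rintro _ ⟨P, -, rfl⟩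
    exact Real.rpow_nonneg (hg P) _

end Products

section Operators

variable {E : Type*} [NormedAddCommGroup E] [NormedSpace ℝ E]

theorem hmnc_eq_sInf (L : E →L[ℝ] E) : hmnc L =
    sInf {ε : ℝ | 0 < ε ∧ ∃ S : Finset E, ∀ x, ‖x‖ ≤ 1 → ∃ y ∈ S, ‖L x - y‖ < ε} := by
  simp [hmnc, Set.subset_def, dist_eq_norm]

theorem hmnc_nonneg (L : E →L[ℝ] E) : 0 ≤ hmnc L :=
  hmnc_eq_sInf L ▸ Real.sInf_nonneg fun _ hε => hε.1.le

theorem hmnc_le {L : E →L[ℝ] E} {ε : ℝ} (hε : 0 < ε) {S : Finset E}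
    (hS : ∀ x, ‖x‖ ≤ 1 → ∃ y ∈ S, ‖L x - y‖ < ε) : hmnc L ≤ ε :=
  hmnc_eq_sInf L ▸ csInf_le ⟨0, fun _ hε => hε.1.le⟩ ⟨hε, S, hS⟩

theorem exists_net_of_hmnc_lt {L : E →L[ℝ] E} {r : ℝ} (h : hmnc L < r) :
    ∃ S : Finset E, ∀ x, ‖x‖ ≤ 1 → ∃ y ∈ S, ‖L x - y‖ < r := by
  rw [hmnc_eq_sInf] at h
  have hne : ∃ ε, 0 < ε ∧ ∃ S : Finset E, ∀ x, ‖x‖ ≤ 1 → ∃ y ∈ S, ‖L x - y‖ < ε :=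
    ⟨‖L‖ + 1, by positivity, {0}, fun x hx =>
      ⟨0, Finset.mem_singleton_self 0, by simpa using (L.le_opNorm_of_le hx).trans_lt (by simp)⟩⟩
  obtain ⟨ε, ⟨-, S, hS⟩, hεr⟩ := exists_lt_of_csInf_lt hne h
  exact ⟨S, fun x hx => (hS x hx).imp fun y hy => ⟨hy.1, hy.2.trans hεr⟩⟩

theorem exists_net_of_norm_sub_le {L K : E →L[ℝ] E} {S : Finset E} {r δ : ℝ}
    (hK : ∀ x, ‖x‖ ≤ 1 → ∃ y ∈ S, ‖K x - y‖ < r) (hLK : ‖L - K‖ ≤ δ) :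
    ∀ x, ‖x‖ ≤ 1 → ∃ y ∈ S, ‖L x - y‖ < δ + r := by
  intro x hx
  obtain ⟨y, hy, hKy⟩ := hK x hx
  refine ⟨y, hy, ?_⟩
  calc ‖L x - y‖ = ‖(L - K) x + (K x - y)‖ := by simp
    _ ≤ ‖(L - K) x‖ + ‖K x - y‖ := norm_add_le _ _
    _ < δ + r := add_lt_add_of_le_of_lt (((L - K).le_opNorm_of_le hx).trans (by simpa)) hKy

theorem exists_net_of_finiteDimensional_range {K : E →L[ℝ] E}
    (hK : FiniteDimensional ℝ (LinearMap.range (K : E →ₗ[ℝ] E))) {ε : ℝ} (hε : 0 < ε) :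
    ∃ S : Finset E, ∀ x, ‖x‖ ≤ 1 → ∃ y ∈ S, ‖K x - y‖ < ε := by
  set V := LinearMap.range (K : E →ₗ[ℝ] E)
  have hsub : K '' Metric.closedBall 0 1 ⊆ Subtype.val '' Metric.closedBall (0 : V) ‖K‖ := by
    rintro _ ⟨x, hx, rfl⟩
    refine ⟨⟨K x, LinearMap.mem_range_self _ x⟩, ?_, rfl⟩
    simpa using K.le_opNorm_of_le (mem_closedBall_zero_iff.1 hx)
  have htb : TotallyBounded (K '' Metric.closedBall 0 1) :=
    (((isCompact_closedBall _ _).image continuous_subtype_val).totallyBounded).subset hsub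
  obtain ⟨t, ht, hcover⟩ := Metric.totallyBounded_iff.1 htb ε hε
  refine ⟨ht.toFinset, fun x hx => ?_⟩
  obtain ⟨y, hy, hxy⟩ := Set.mem_iUnion₂.1 (hcover ⟨x, mem_closedBall_zero_iff.2 hx, rfl⟩)
  exact ⟨y, ht.mem_toFinset.2 hy, by rwa [Metric.mem_ball, dist_eq_norm] at hxy⟩

theorem finiteDimensional_range_zero :
    FiniteDimensional ℝ (LinearMap.range ((0 : E →L[ℝ] E) : E →ₗ[ℝ] E)) := by
  rw [ContinuousLinearMap.toLinearMap_zero, LinearMap.range_zero]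
  infer_instance

theorem fdist_nonneg (L : E →L[ℝ] E) : 0 ≤ fdist L :=
  Real.sInf_nonneg fun _ ⟨_, _, hc⟩ => hc ▸ norm_nonneg _

theorem fdist_le_norm_sub (L : E →L[ℝ] E) {K : E →L[ℝ] E}
    (hK : FiniteDimensional ℝ (LinearMap.range (K : E →ₗ[ℝ] E))) : fdist L ≤ ‖L - K‖ :=
  csInf_le ⟨0, fun _ ⟨_, _, hc⟩ => hc ▸ norm_nonneg _⟩ ⟨K, hK, rfl⟩

theorem fdist_le_norm (L : E →L[ℝ] E) : fdist L ≤ ‖L‖ := by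
  simpa using fdist_le_norm_sub L finiteDimensional_range_zero

theorem hmnc_le_fdist (L : E →L[ℝ] E) : hmnc L ≤ fdist L := by
  refine le_csInf ⟨_, 0, finiteDimensional_range_zero, rfl⟩ ?_
  rintro _ ⟨K, hK, rfl⟩
  refine le_of_forall_pos_le_add fun ε hε => ?_
  obtain ⟨S, hS⟩ := exists_net_of_finiteDimensional_range hK hε
  exact hmnc_le (by positivity) (exists_net_of_norm_sub_le hS le_rfl)

theorem fdist_le_of_forall_exists_mem_sub_le {L : E →L[ℝ] E} (W : Submodule ℝ E)
    [FiniteDimensional ℝ W] {δ : ℝ} (hδ : 0 ≤ δ) (h : ∀ x, ‖x‖ ≤ 1 → ∃ z ∈ W, ‖L x - z‖ ≤ δ) :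
    fdist L ≤ (1 + Module.finrank ℝ W) * δ := by
  obtain ⟨p, hp, hpn⟩ := W.exists_projection_norm_le_finrank
  set K : E →L[ℝ] E := W.subtypeL ∘L p ∘L L
  have hK : FiniteDimensional ℝ (LinearMap.range (K : E →ₗ[ℝ] E)) := by
    refine Submodule.finiteDimensional_of_le (S₂ := W) ?_
    rintro _ ⟨x, rfl⟩
    exact (p (L x)).2
  refine (fdist_le_norm_sub L hK).trans
    (ContinuousLinearMap.opNorm_le_of_unit_norm (by positivity) fun x hx => ?_)
  obtain ⟨z, hz, hLz⟩ := h x hx.le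
  have hKx : (L - K) x = (L x - z) - W.subtypeL (p (L x - z)) := by
    simp [K, map_sub, hp ⟨z, hz⟩]
  calc ‖(L - K) x‖ ≤ ‖L x - z‖ + ‖p (L x - z)‖ := hKx ▸ norm_sub_le _ _
    _ ≤ ‖L x - z‖ + Module.finrank ℝ W * ‖L x - z‖ := by
        gcongr
        exact p.le_of_opNorm_le hpn _
    _ ≤ (1 + Module.finrank ℝ W) * δ := by nlinarith [norm_nonneg (L x - z)]

theorem exists_uniform_net_of_hmnc_lt {B : Set (E →L[ℝ] E)} (hB : IsCompact (closure B))
    {r R : ℝ} (hr : ∀ Q ∈ B, hmnc Q < r) (hrR : r < R) :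
    ∃ Y : Finset E, ∀ Q ∈ B, ∀ x, ‖x‖ ≤ 1 → ∃ y ∈ Y, ‖Q x - y‖ ≤ R := by
  classical
  obtain ⟨t, htB, ht, hcover⟩ := Metric.finite_approx_of_totallyBounded
    (hB.totallyBounded.subset subset_closure) (R - r) (sub_pos.2 hrR)
  choose! S hS using fun Q (hQ : Q ∈ B) => exists_net_of_hmnc_lt (hr Q hQ)
  refine ⟨ht.toFinset.biUnion S, fun Q hQ x hx => ?_⟩
  obtain ⟨c, hct, hQc⟩ := Set.mem_iUnion₂.1 (hcover hQ)
  rw [Metric.mem_ball, dist_eq_norm] at hQc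
  obtain ⟨y, hy, hQy⟩ := exists_net_of_norm_sub_le (hS c (htB hct)) hQc.le x hx
  exact ⟨y, Finset.mem_biUnion.2 ⟨c, ht.mem_toFinset.2 hct, hy⟩, by linarith⟩

/-- The approximating subspace for `Q * P'` is spanned by `Q` applied to the one for `P'`,
together with `Y`, which absorbs the rescaled error. -/
theorem exists_span_approx_of_mem_prods {B : Set (E →L[ℝ] E)} {Y : Finset E} {σ : ℝ}
    (hσ : 0 < σ) (hY : ∀ Q ∈ B, ∀ x, ‖x‖ ≤ 1 → ∃ y ∈ Y, ‖Q x - y‖ ≤ σ) {n : ℕ} {P : E →L[ℝ] E}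
    (hP : P ∈ prods B n) :
    ∃ U : Finset E, U.card ≤ n * Y.card ∧
      ∀ x, ‖x‖ ≤ 1 → ∃ z ∈ Submodule.span ℝ (U : Set E), ‖P x - z‖ ≤ σ ^ n := by
  classical
  induction n generalizing P with
  | zero =>
    rw [prods_zero, Set.mem_singleton_iff] at hP
    exact ⟨∅, by simp, fun x hx => ⟨0, Submodule.zero_mem _, by simpa [hP] using hx⟩⟩
  | succ n ih =>
    obtain ⟨Q, hQ, P', hP', rfl⟩ := mem_prods_succ.1 hP
    obtain ⟨U, hUcard, hU⟩ := ih hP'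
    refine ⟨U.image Q ∪ Y, ?_, fun x hx => ?_⟩
    · calc (U.image Q ∪ Y).card ≤ U.card + Y.card :=
            (Finset.card_union_le _ _).trans (Nat.add_le_add_right Finset.card_image_le _)
        _ ≤ (n + 1) * Y.card := by nlinarith
    obtain ⟨z, hz, hP'z⟩ := hU x hx
    have hσn : 0 < σ ^ n := pow_pos hσ n
    set u := (σ ^ n)⁻¹ • (P' x - z)
    have hu : ‖u‖ ≤ 1 := by
      rw [norm_smul, norm_inv, Real.norm_of_nonneg hσn.le]
      exact inv_mul_le_one_of_le₀ hP'z hσn.le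
    obtain ⟨y, hy, hQu⟩ := hY Q hQ u hu
    refine ⟨Q z + σ ^ n • y, ?_, ?_⟩
    · refine Submodule.add_mem _ ?_ (Submodule.smul_mem _ _ (Submodule.subset_span (by simp [hy])))
      refine Submodule.span_mono ?_ (Submodule.apply_mem_span_image_of_mem_span (Q : E →ₗ[ℝ] E) hz)
      simp
    · have hPx : (Q * P') x - (Q z + σ ^ n • y) = σ ^ n • (Q u - y) := by
        simp [u, smul_sub, smul_inv_smul₀ hσn.ne', map_sub]
        abel
      rw [hPx, norm_smul, Real.norm_of_nonneg hσn.le, pow_succ]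
      exact mul_le_mul_of_nonneg_left hQu hσn.le

theorem fdist_le_of_mem_prods {B : Set (E →L[ℝ] E)} {Y : Finset E} {σ : ℝ} (hσ : 0 < σ)
    (hY : ∀ Q ∈ B, ∀ x, ‖x‖ ≤ 1 → ∃ y ∈ Y, ‖Q x - y‖ ≤ σ) {n : ℕ} {P : E →L[ℝ] E}
    (hP : P ∈ prods B n) : fdist P ≤ (1 + n * Y.card) * σ ^ n := by
  obtain ⟨U, hUcard, hU⟩ := exists_span_approx_of_mem_prods hσ hY hP
  have hrank : (Module.finrank ℝ (Submodule.span ℝ (U : Set E)) : ℝ) ≤ n * Y.card := by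
    exact_mod_cast (finrank_span_finset_le_card U).trans hUcard
  calc fdist P ≤ (1 + Module.finrank ℝ (Submodule.span ℝ (U : Set E))) * σ ^ n :=
        fdist_le_of_forall_exists_mem_sub_le _ (by positivity) hU
    _ ≤ (1 + n * Y.card) * σ ^ n := by gcongr

theorem exists_uniform_net_prods_of_sSup_lt {A : Set (E →L[ℝ] E)} (hA : IsCompact (closure A)) {m : ℕ}
    (hm : 0 < m) {s t : ℝ} (hs : 0 ≤ s) (hst : s < t)
    (hAm : sSup ((fun P => hmnc P ^ (1 / (m : ℝ))) '' prods A m) < s) :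
    ∃ Y : Finset E, ∀ Q ∈ prods A m, ∀ x, ‖x‖ ≤ 1 → ∃ y ∈ Y, ‖Q x - y‖ ≤ t ^ m := by
  refine exists_uniform_net_of_hmnc_lt (hA.closure_prods m) (fun Q hQ => ?_)
    (pow_lt_pow_left₀ hst hs hm.ne')
  have hlt : hmnc Q ^ (m : ℝ)⁻¹ < s := by
    simpa using (le_csSup (bddAbove_image_rpow_prods hA hmnc_nonneg
      (fun L => (hmnc_le_fdist L).trans (fdist_le_norm L)) m) ⟨Q, hQ, rfl⟩).trans_lt hAm
  rwa [Real.rpow_inv_lt_iff_of_pos (hmnc_nonneg Q) hs (by positivity), Real.rpow_natCast] at hlt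

theorem le_of_tendsto_sSup_fdist {A : Set (E →L[ℝ] E)} {ρ : ℝ}
    (hf : Tendsto (fun n : ℕ => sSup ((fun P => fdist P ^ (1 / (n : ℝ))) '' prods A n))
      atTop (𝓝 ρ))
    {m : ℕ} (hm : 0 < m) {t : ℝ} (ht : 0 < t) {Y : Finset E}
    (hY : ∀ Q ∈ prods A m, ∀ x, ‖x‖ ≤ 1 → ∃ y ∈ Y, ‖Q x - y‖ ≤ t ^ m) : ρ ≤ t := by
  set C : ℝ := 1 + Y.card
  have hnm : Tendsto (fun n : ℕ => n * m) atTop atTop :=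
    tendsto_atTop_mono (fun n => Nat.le_mul_of_pos_right n hm) tendsto_id
  have hbound : ∀ n, 0 < n → sSup ((fun P => fdist P ^ (1 / ((n * m : ℕ) : ℝ))) ''
      prods A (n * m)) ≤ (C * (n * m : ℕ)) ^ (1 / ((n * m : ℕ) : ℝ)) * t := by
    intro n hn
    refine Real.sSup_le ?_ (by positivity)
    rintro _ ⟨P, hP, rfl⟩
    have hfd : fdist P ≤ C * (n * m : ℕ) * t ^ (n * m) :=
      calc fdist P ≤ (1 + n * Y.card) * (t ^ m) ^ n :=
            fdist_le_of_mem_prods (pow_pos ht m) hY (prods_mul_subset_prods_prods m n hP)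
        _ ≤ C * (n * m : ℕ) * t ^ (n * m) := by
            rw [← pow_mul, mul_comm m n]
            gcongr
            have h1 : (1 : ℝ) ≤ n * m := by exact_mod_cast Nat.one_le_iff_ne_zero.2 (by positivity)
            have h2 : (n : ℝ) ≤ n * m := by exact_mod_cast Nat.le_mul_of_pos_right n hm
            push_cast [C]
            nlinarith [mul_le_mul_of_nonneg_left h2 (Y.card.cast_nonneg : (0 : ℝ) ≤ Y.card)]
    calc fdist P ^ (1 / ((n * m : ℕ) : ℝ))
        ≤ (C * (n * m : ℕ) * t ^ (n * m)) ^ (1 / ((n * m : ℕ) : ℝ)) :=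
          Real.rpow_le_rpow (fdist_nonneg P) hfd (by positivity)
      _ = (C * (n * m : ℕ)) ^ (1 / ((n * m : ℕ) : ℝ)) * t := by
          rw [Real.mul_rpow (by positivity) (by positivity), one_div,
            Real.pow_rpow_inv_natCast ht.le (by positivity)]
  refine le_of_tendsto_of_tendsto (hf.comp hnm) ?_ ((eventually_gt_atTop 0).mono hbound)
  simpa using ((tendsto_mul_natCast_rpow_one_div (by positivity : (0 : ℝ) < C)).comp hnm).mul_const t

end Operators

theorem chi_radius_eq_f_radius_general (A : Set (𝕏 →L[ℝ] 𝕏))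
    (hpc : IsCompact (closure A)) (ρχ ρf : ℝ)
    (hχ : Tendsto (fun n : ℕ => sSup ((fun P => hmnc P ^ (1 / (n : ℝ))) '' prods A n))
      atTop (nhds ρχ))
    (hf : Tendsto (fun n : ℕ => sSup ((fun P => fdist P ^ (1 / (n : ℝ))) '' prods A n))
      atTop (nhds ρf)) :
    ρχ = ρf := by
  have hχf : ρχ ≤ ρf := le_of_tendsto_of_tendsto' hχ hf fun n =>
    sSup_image_le_sSup_image (bddAbove_image_rpow_prods hpc fdist_nonneg fdist_le_norm n)
      fun P _ => Real.rpow_le_rpow (hmnc_nonneg P) (hmnc_le_fdist P) (by positivity)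
  have hρχ : 0 ≤ ρχ := nonneg_of_tendsto_sSup_image_rpow hmnc_nonneg hχ
  refine le_antisymm hχf (le_of_forall_gt_imp_ge_of_dense fun t ht => ?_)
  obtain ⟨s, hρs, hst⟩ := exists_between ht
  obtain ⟨m, hAm, hm⟩ := ((hχ.eventually (gt_mem_nhds hρs)).and (eventually_gt_atTop 0)).exists
  obtain ⟨Y, hY⟩ := exists_uniform_net_prods_of_sSup_lt hpc hm (hρχ.trans hρs.le) hst hAm
  exact le_of_tendsto_sSup_fdist hf hm (by linarith) hY

/-- For a nonempty precompact set `A` of bounded operators on a Banach space `𝕏`,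
`ρ_χ(A) = ρ_f(A)`.  The limits defining `ρ_χ(A)` and `ρ_f(A)` exist by submultiplicativity
and are given here as hypotheses `hχ`, `hf`. -/
theorem chi_radius_eq_f_radius (A : Set (𝕏 →L[ℝ] 𝕏)) (hne : A.Nonempty)
    (hpc : IsCompact (closure A)) (ρχ ρf : ℝ)
    (hχ : Tendsto (fun n : ℕ => sSup ((fun P => hmnc P ^ (1 / (n : ℝ))) '' prods A n))
      atTop (nhds ρχ))
    (hf : Tendsto (fun n : ℕ => sSup ((fun P => fdist P ^ (1 / (n : ℝ))) '' prods A n))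
      atTop (nhds ρf)) :
    ρχ = ρf :=
  chi_radius_eq_f_radius_general A hpc ρχ ρf hχ hf
end
end

section
/- Let T be a homeomorphism of a compact metric space X preserving a Borel probability measure μ, let 𝔛 be a Banach space, and let P : X → B(𝔛) be a Borel-measurable μ-continuous map. Then there exists a Borel set Λ̃ ⊆ X with T(Λ̃) ⊆ Λ̃ and μ(Λ̃) = 1 such that for every x ∈ Λ̃, liminf_{n→∞} ‖P(x) − P(T^n x)‖ = 0. -/
/-!
By Poincaré recurrence for the conservative map `T`, almost every point `x` of each compact
piece `K m` returns infinitely often to `K m ∩ U` for every neighbourhood `U` of `x`. Continuity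
of `P` on `K m` turns these returns into times `n` with `‖P x - P (Tⁿ x)‖` arbitrarily small.
The full-measure set of such points becomes forward invariant after intersecting all its preimages
under the iterates of `T`.
-/

open Set Filter Topology MeasureTheory TopologicalSpace

theorem MapClusterPt.liminf_eq_of_eventually_ge {ι : Type*} {F : Filter ι} {u : ι → ℝ} {a : ℝ}
    (hu : MapClusterPt a F u) (ha : ∀ᶠ n in F, a ≤ u n) : F.liminf u = a := by
  have hfreq : ∃ᶠ n in F, u n ≤ a + 1 :=
    mapClusterPt_iff_frequently.1 hu _ (Iic_mem_nhds (lt_add_one a))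
  exact le_antisymm (hu.liminf_le ⟨a, ha⟩) (le_liminf_of_le (.of_frequently_le hfreq) ha)

theorem ContinuousWithinAt.mapClusterPt_comp {X Y ι : Type*} [TopologicalSpace X]
    [TopologicalSpace Y] {g : X → Y} {s : Set X} {x : X} {F : Filter ι} {u : ι → X}
    (hg : ContinuousWithinAt g s x) (hu : ∀ t ∈ 𝓝[s] x, ∃ᶠ n in F, u n ∈ t) :
    MapClusterPt (g x) F (g ∘ u) :=
  mapClusterPt_iff_frequently.2 fun _ ht => hu _ (hg ht)

theorem ContinuousWithinAt.liminf_norm_sub_eq_zero {X E ι : Type*} [TopologicalSpace X]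
    [SeminormedAddCommGroup E] {g : X → E} {s : Set X} {x : X} {F : Filter ι} {u : ι → X}
    (hg : ContinuousWithinAt g s x) (hu : ∀ t ∈ 𝓝[s] x, ∃ᶠ n in F, u n ∈ t) :
    F.liminf (fun n => ‖g x - g (u n)‖) = 0 := by
  have hcl : MapClusterPt 0 F (fun n => ‖g x - g (u n)‖) := by
    simpa [Function.comp_def] using
      (hg.mapClusterPt_comp hu).continuousAt_comp (f := fun y => ‖g x - y‖) (by fun_prop)
  exact hcl.liminf_eq_of_eventually_ge (.of_forall fun _ => norm_nonneg _)

namespace MeasureTheory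

variable {α : Type*} [MeasurableSpace α] {f : α → α} {μ : Measure α}

theorem Conservative.ae_frequently_mem_of_mem_nhdsWithin [TopologicalSpace α]
    [SecondCountableTopology α] [OpensMeasurableSpace α] (hf : Conservative f μ) {s : Set α}
    (hs : NullMeasurableSet s μ) :
    ∀ᵐ x ∂μ, x ∈ s → ∀ t ∈ 𝓝[s] x, ∃ᶠ n in atTop, f^[n] x ∈ t := by
  have hbasis : ∀ o ∈ countableBasis α, ∀ᵐ x ∂μ, x ∈ s ∩ o → ∃ᶠ n in atTop, f^[n] x ∈ s ∩ o :=
    fun o ho => hf.ae_mem_imp_frequently_image_mem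
      (hs.inter (isOpen_of_mem_countableBasis ho).nullMeasurableSet)
  filter_upwards [(ae_ball_iff (countable_countableBasis α)).2 hbasis] with x hx hxs t ht
  obtain ⟨U, hUopen, hxU, hUt⟩ := mem_nhdsWithin.1 ht
  obtain ⟨o, ho, hxo, hoU⟩ := (isBasis_countableBasis α).isOpen_iff.1 hUopen x hxU
  exact (hx o ho ⟨hxs, hxo⟩).mono fun n hn => hUt ⟨hoU hn.2, hn.1⟩

theorem Measure.QuasiMeasurePreserving.exists_measurableSet_mapsTo_of_ae
    (hf : Measure.QuasiMeasurePreserving f μ μ)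
    {p : α → Prop} (hp : ∀ᵐ x ∂μ, p x) :
    ∃ s, MeasurableSet s ∧ MapsTo f s s ∧ μ sᶜ = 0 ∧ ∀ x ∈ s, p x := by
  obtain ⟨s₀, hs₀ae, hs₀, hs₀p⟩ := hp.exists_measurable_mem
  refine ⟨⋂ k : ℕ, f^[k] ⁻¹' s₀, .iInter fun k => (hf.iterate k).measurable hs₀,
    fun x hx => mem_iInter.2 fun k => ?_, ?_, fun x hx => hs₀p x (mem_iInter.1 hx 0)⟩
  · simpa only [mem_preimage, Function.iterate_succ_apply] using mem_iInter.1 hx (k + 1)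
  · have hall : ∀ᵐ x ∂μ, ∀ k, f^[k] x ∈ s₀ := ae_all_iff.2 fun k => (hf.iterate k).ae hs₀ae
    rw [← mem_ae_iff]
    filter_upwards [hall] with x hx using mem_iInter.2 hx

end MeasureTheory

theorem mu_continuous_recurrence_general {X : Type*} [MetricSpace X] [CompactSpace X]
    [MeasurableSpace X] [BorelSpace X]
    {𝕏 : Type*} [NormedAddCommGroup 𝕏] [NormedSpace ℝ 𝕏]
    (T : X ≃ₜ X) (μ : Measure X) [IsProbabilityMeasure μ]
    (hT : MeasurePreserving T μ μ)
    (P : X → (𝕏 →L[ℝ] 𝕏))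
    (K : ℕ → Set X) (hKcpt : ∀ n, IsCompact (K n))
    (hKfull : μ (⋃ n, K n) = 1)
    (hKcont : ∀ n, ContinuousOn P (K n)) :
    ∃ Λ : Set X, MeasurableSet Λ ∧ ⇑T '' Λ ⊆ Λ ∧ μ Λ = 1 ∧
      ∀ x ∈ Λ, Filter.atTop.liminf (fun n : ℕ => ‖P x - P ((⇑T)^[n] x)‖) = 0 := by
  have hrec : ∀ᵐ x ∂μ, ∀ m, x ∈ K m → ∀ t ∈ 𝓝[K m] x, ∃ᶠ n in atTop, (⇑T)^[n] x ∈ t :=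
    ae_all_iff.2 fun m =>
      hT.conservative.ae_frequently_mem_of_mem_nhdsWithin (hKcpt m).nullMeasurableSet
  have hK : ∀ᵐ x ∂μ, x ∈ ⋃ m, K m :=
    mem_ae_iff.2 <| (prob_compl_eq_zero_iff (.iUnion fun m => (hKcpt m).measurableSet)).2 hKfull
  have hliminf : ∀ᵐ x ∂μ, atTop.liminf (fun n : ℕ => ‖P x - P ((⇑T)^[n] x)‖) = 0 := by
    filter_upwards [hrec, hK] with x hx hxK
    obtain ⟨m, hm⟩ := mem_iUnion.1 hxK
    exact (hKcont m x hm).liminf_norm_sub_eq_zero (hx m hm)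
  obtain ⟨Λ, hΛ, hΛT, hΛae, hΛliminf⟩ :=
    hT.quasiMeasurePreserving.exists_measurableSet_mapsTo_of_ae hliminf
  exact ⟨Λ, hΛ, hΛT.image_subset, (prob_compl_eq_zero_iff hΛ).1 hΛae, hΛliminf⟩

/-- **Recurrence of a `μ`-continuous operator-valued map** (Lemma 2 of the paper).  If `T` is a
homeomorphism of a compact metric space preserving a Borel probability measure `μ` and
`P : X → B(𝕏)` is Borel-measurable and `μ`-continuous (continuous on each member of a sequence
of pairwise disjoint compact sets of full measure), then there is a Borel set `Λ̃` with
`T(Λ̃) ⊆ Λ̃` and `μ(Λ̃) = 1` such that `liminf_n ‖P(x) - P(Tⁿ x)‖ = 0` for every `x ∈ Λ̃`. -/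
theorem mu_continuous_recurrence {X : Type*} [MetricSpace X] [CompactSpace X]
    [MeasurableSpace X] [BorelSpace X]
    {𝕏 : Type*} [NormedAddCommGroup 𝕏] [NormedSpace ℝ 𝕏] [CompleteSpace 𝕏]
    [MeasurableSpace (𝕏 →L[ℝ] 𝕏)] [BorelSpace (𝕏 →L[ℝ] 𝕏)]
    (T : X ≃ₜ X) (μ : Measure X) [IsProbabilityMeasure μ]
    (hT : MeasurePreserving T μ μ)
    (P : X → (𝕏 →L[ℝ] 𝕏)) (hP : Measurable P)
    (K : ℕ → Set X) (hKcpt : ∀ n, IsCompact (K n))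
    (hKdisj : Pairwise (Function.onFun Disjoint K))
    (hKfull : μ (⋃ n, K n) = 1)
    (hKcont : ∀ n, ContinuousOn P (K n)) :
    ∃ Λ : Set X, MeasurableSet Λ ∧ ⇑T '' Λ ⊆ Λ ∧ μ Λ = 1 ∧
      ∀ x ∈ Λ, Filter.atTop.liminf (fun n : ℕ => ‖P x - P ((⇑T)^[n] x)‖) = 0 :=
  mu_continuous_recurrence_general T μ hT P K hKcpt hKfull hKcont
end

section
/- Let 𝔛 be a Banach space, let 𝔛_∞ be the Banach space of bounded sequences (v_i)_{i≥1} in 𝔛 with norm ‖(v_i)‖ := sup_i ‖v_i‖, and let (α_i)_{i≥1} be a nonincreasing sequence in (0,1]. For L ∈ B(𝔛) define 𝔈(L) ∈ B(𝔛_∞) by (𝔈(L)v)_1 = L v_1 and (𝔈(L)v)_{i+1} = α_i v_i for i ≥ 1. Then 𝔈(L) is injective for every L ∈ B(𝔛), and for every n ∈ ℕ and all L_1, …, L_n ∈ B(𝔛) one has ‖𝔈(L_n)⋯𝔈(L_1)‖ = max_{0 ≤ k ≤ n} ( (∏_{i=1}^{k} α_i) · ‖L_{n−k}⋯L_1‖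 ), where for k = n the product L_{n−k}⋯L_1 is interpreted as the identity operator and the empty product ∏_{i=1}^{0} α_i equals 1. -/
/-!
Unwinding the definition, `(𝔈(L_n)⋯𝔈(L_1) v)_j` equals `v_{j-n}` (index truncated at `0`) acted
on by `L_{n-j}⋯L_1` (the identity once `j ≥ n`) and scaled by the `min j n` consecutive weights
`α_{j-n}, …, α_{j-1}`. For `j ≤ n` its norm is thus at most `‖v‖` times the `j`-th term of the
maximum; for `j > n` the scalar is a product of `n` weights starting at a later index, hence at
most `α_0⋯α_{n-1}` because `α` is antitone. Conversely, the sequence `(x, 0, 0, …)` is mapped at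
index `k ≤ n` to `(α_0⋯α_{k-1}) L_{n-k}⋯L_1 x`, so every term of the maximum is attained.
-/

open Filter Topology

noncomputable section

variable {𝕏 : Type*} [NormedAddCommGroup 𝕏] [NormedSpace ℝ 𝕏] [CompleteSpace 𝕏]

/-- The Banach space `𝔛_∞ = ℓ^∞(ℕ, 𝔛)` of bounded sequences in `𝕏` with the sup norm. -/
abbrev SeqSpace (𝕏 : Type*) [NormedAddCommGroup 𝕏] : Type _ := lp (fun _ : ℕ => 𝕏) ⊤

/-- `IsExtOp α E` says that `E` is the map `𝔈 : B(𝔛) → B(𝔛_∞)` determined by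
`(𝔈(L)v)_0 = L v_0` and `(𝔈(L)v)_{i+1} = α_i • v_i`. -/
def IsExtOp (α : ℕ → ℝ)
    (E : (𝕏 →L[ℝ] 𝕏) → (SeqSpace 𝕏 →L[ℝ] SeqSpace 𝕏)) : Prop :=
  ∀ (L : 𝕏 →L[ℝ] 𝕏) (v : SeqSpace 𝕏),
    (E L v) 0 = L (v 0) ∧ ∀ i : ℕ, (E L v) (i + 1) = α i • v i

open Finset

theorem Antitone.prod_Ico_add_le_prod_range {R : Type*} [CommSemiring R] [PartialOrder R]
    [IsOrderedRing R] {α : ℕ → R} (hanti : Antitone α) (h0 : ∀ i, 0 ≤ α i) (m n : ℕ) :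
    ∏ i ∈ Ico m (m + n), α i ≤ ∏ i ∈ range n, α i := by
  rw [prod_Ico_eq_prod_range, Nat.add_sub_cancel_left]
  exact prod_le_prod (fun i _ => h0 _) fun i _ => hanti (Nat.le_add_left i m)

variable {X : Type*} [NormedAddCommGroup X] [NormedSpace ℝ X]

def extSeq (α : ℕ → ℝ) (L : X →L[ℝ] X) (v : ℕ → X) : ℕ → X
  | 0 => L (v 0)
  | j + 1 => α j • v j

theorem norm_extSeq_le {α : ℕ → ℝ} {C : ℝ} (hα : ∀ i, ‖α i‖ ≤ C) (L : X →L[ℝ] X)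
    (v : SeqSpace X) (i : ℕ) : ‖extSeq α L v i‖ ≤ max ‖L‖ C * ‖v‖ := by
  have hv : ∀ i, ‖v i‖ ≤ ‖v‖ := lp.norm_apply_le_norm ENNReal.top_ne_zero v
  cases i with
  | zero => exact (L.le_opNorm_of_le (hv 0)).trans (by gcongr; exact le_max_left _ _)
  | succ j =>
    calc ‖extSeq α L v (j + 1)‖ = ‖α j‖ * ‖v j‖ := norm_smul _ _
      _ ≤ max ‖L‖ C * ‖v‖ :=
        mul_le_mul ((hα j).trans (le_max_right _ _)) (hv j) (norm_nonneg _)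
          ((norm_nonneg L).trans (le_max_left _ _))

def extOp (α : ℕ → ℝ) {C : ℝ} (hα : ∀ i, ‖α i‖ ≤ C) (L : X →L[ℝ] X) :
    SeqSpace X →L[ℝ] SeqSpace X :=
  LinearMap.mkContinuous
    { toFun v := ⟨extSeq α L v, memℓp_infty ⟨_, Set.forall_mem_range.2 (norm_extSeq_le hα L v)⟩⟩
      map_add' v w := by ext (_ | _) <;> simp [extSeq, smul_add] <;> rfl
      map_smul' c v := by ext (_ | _) <;> simp [extSeq, smul_comm c] }
    (max ‖L‖ C) fun v =>
      lp.norm_le_of_forall_le (mul_nonneg ((norm_nonneg L).trans (le_max_left _ _)) (norm_nonneg v))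
        (norm_extSeq_le hα L v)

theorem isExtOp_extOp (α : ℕ → ℝ) {C : ℝ} (hα : ∀ i, ‖α i‖ ≤ C) :
    IsExtOp α (extOp (X := X) α hα) :=
  fun _ _ => ⟨rfl, fun _ => rfl⟩

namespace IsExtOp

variable {α : ℕ → ℝ} {E : (X →L[ℝ] X) → (SeqSpace X →L[ℝ] SeqSpace X)}

theorem injective (hE : IsExtOp α E) (hα : ∀ i, α i ≠ 0) (L : X →L[ℝ] X) :
    Function.Injective (E L) := fun v w h =>
  lp.ext <| funext fun i => smul_right_injective X (hα i) <| by
    simpa only [(hE L v).2, (hE L w).2] using congr_arg (· (i + 1)) h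

theorem list_prod_map_apply (hE : IsExtOp α E) (Ls : List (X →L[ℝ] X)) (v : SeqSpace X)
    (j : ℕ) :
    (Ls.map E).prod v j =
      (∏ i ∈ Ico (j - Ls.length) j, α i) • (Ls.drop j).prod (v (j - Ls.length)) := by
  induction Ls generalizing j with
  | nil => simp
  | cons L Ls ih =>
    rw [List.map_cons, List.prod_cons, mul_apply_eq_comp]
    cases j with
    | zero => simp [(hE L _).1, ih]
    | succ j =>
      rw [(hE L _).2, ih, smul_smul, List.length_cons, List.drop_succ_cons,
        Nat.add_sub_add_right, mul_comm, ← prod_Ico_succ_top (Nat.sub_le j _)]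

theorem norm_list_prod_map_apply_le (hE : IsExtOp α E) (h0 : ∀ i, 0 ≤ α i)
    (hanti : Antitone α) (Ls : List (X →L[ℝ] X)) (v : SeqSpace X) (j : ℕ) :
    ‖(Ls.map E).prod v j‖ ≤
      (∏ i ∈ range (min j Ls.length), α i) * ‖(Ls.drop (min j Ls.length)).prod‖ * ‖v‖ := by
  rw [hE.list_prod_map_apply, norm_smul, Real.norm_of_nonneg (prod_nonneg fun i _ => h0 i),
    mul_assoc]
  have hv := ((Ls.drop j).prod).le_opNorm_of_le
    (lp.norm_apply_le_norm ENNReal.top_ne_zero v (j - Ls.length))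
  rcases le_total j Ls.length with hj | hj
  · rw [min_eq_left hj, Nat.sub_eq_zero_of_le hj, ← range_eq_Ico] at *
    exact mul_le_mul_of_nonneg_left hv (prod_nonneg fun i _ => h0 i)
  · obtain ⟨m, rfl⟩ := Nat.exists_eq_add_of_le' hj
    rw [min_eq_right hj, List.drop_length, Nat.add_sub_cancel] at *
    rw [List.drop_eq_nil_of_le hj] at hv ⊢
    exact mul_le_mul (hanti.prod_Ico_add_le_prod_range h0 m _) hv (by positivity)
      (prod_nonneg fun i _ => h0 i)

theorem norm_list_prod_map_le (hE : IsExtOp α E) (h0 : ∀ i, 0 ≤ α i) (hanti : Antitone α)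
    (Ls : List (X →L[ℝ] X)) :
    ‖(Ls.map E).prod‖ ≤ (range (Ls.length + 1)).sup' nonempty_range_add_one
      (fun k => (∏ i ∈ range k, α i) * ‖(Ls.drop k).prod‖) := by
  have hnonneg : 0 ≤ (range (Ls.length + 1)).sup' nonempty_range_add_one
      (fun k => (∏ i ∈ range k, α i) * ‖(Ls.drop k).prod‖) :=
    le_sup'_of_le _ (mem_range_succ_iff.2 (Nat.zero_le _)) (by simp)
  refine ContinuousLinearMap.opNorm_le_bound _ hnonneg fun v =>
    lp.norm_le_of_forall_le (by positivity) fun j => ?_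
  refine (hE.norm_list_prod_map_apply_le h0 hanti Ls v j).trans ?_
  gcongr
  exact le_sup'_of_le _ (mem_range_succ_iff.2 (min_le_right _ _)) le_rfl

theorem norm_smul_prod_drop_le (hE : IsExtOp α E) (Ls : List (X →L[ℝ] X)) {k : ℕ}
    (hk : k ≤ Ls.length) :
    ‖(∏ i ∈ range k, α i) • (Ls.drop k).prod‖ ≤ ‖(Ls.map E).prod‖ := by
  refine ContinuousLinearMap.opNorm_le_bound _ (norm_nonneg _) fun x => ?_
  have happ := hE.list_prod_map_apply Ls (lp.single ⊤ 0 x) k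
  rw [Nat.sub_eq_zero_of_le hk, lp.single_apply_self, ← range_eq_Ico] at happ
  calc ‖((∏ i ∈ range k, α i) • (Ls.drop k).prod) x‖
      = ‖(Ls.map E).prod (lp.single ⊤ 0 x) k‖ := by rw [happ, smul_apply]
    _ ≤ ‖(Ls.map E).prod (lp.single ⊤ 0 x)‖ := lp.norm_apply_le_norm ENNReal.top_ne_zero _ _
    _ ≤ ‖(Ls.map E).prod‖ * ‖x‖ :=
      ((Ls.map E).prod).le_opNorm_of_le (by rw [lp.norm_single (by simp)])

end IsExtOp

/-- The operator `𝔈(L)` on `𝔛_∞` exists, is injective for every `L`, and the norms of products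
of such operators satisfy
`‖𝔈(L_n)⋯𝔈(L_1)‖ = max_{0 ≤ k ≤ n} (∏_{i=1}^k α_i) ‖L_{n-k}⋯L_1‖`
(with `L_{n-k}⋯L_1 = I` when `k = n` and the empty product of `α`'s equal to `1`). -/
theorem extension_operator_norm (α : ℕ → ℝ)
    (hα : ∀ i, 0 < α i ∧ α i ≤ 1) (hanti : Antitone α) :
    (∃ E : (𝕏 →L[ℝ] 𝕏) → (SeqSpace 𝕏 →L[ℝ] SeqSpace 𝕏), IsExtOp α E) ∧
    ∀ E : (𝕏 →L[ℝ] 𝕏) → (SeqSpace 𝕏 →L[ℝ] SeqSpace 𝕏), IsExtOp α E →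
      (∀ L : 𝕏 →L[ℝ] 𝕏, Function.Injective (E L)) ∧
      ∀ Ls : List (𝕏 →L[ℝ] 𝕏),
        ‖(Ls.map E).prod‖ =
          (Finset.range (Ls.length + 1)).sup' Finset.nonempty_range_add_one
            (fun k => (∏ i ∈ Finset.range k, α i) * ‖(Ls.drop k).prod‖) := by
  have h0 : ∀ i, 0 ≤ α i := fun i => (hα i).1.le
  have hα_norm : ∀ i, ‖α i‖ ≤ 1 := fun i => (Real.norm_of_nonneg (h0 i)).trans_le (hα i).2
  refine ⟨⟨_, isExtOp_extOp α hα_norm⟩, fun E hE =>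
    ⟨hE.injective fun i => (hα i).1.ne', fun Ls => ?_⟩⟩
  refine (hE.norm_list_prod_map_le h0 hanti Ls).antisymm (sup'_le _ _ fun k hk => ?_)
  have hk := hE.norm_smul_prod_drop_le Ls (mem_range_succ_iff.1 hk)
  rwa [norm_smul, Real.norm_of_nonneg (prod_nonneg fun i _ => h0 i)] at hk
end
end

section
/- Let 𝔛 be a Banach space and P, P' ∈ B(𝔛); set Q := I − P and Q' := I − P'. For an operator R ∈ B(𝔛) with complement S := I − R and δ > 0 define the closed convex cone K(R, δ) := {u ∈ 𝔛 : ‖Ru‖ ≥ δ^{-1}‖Su‖}. Suppose δ ∈ (0,1) and κ > 0 satisfy δ^{-1} − 2κ(1 + δ^{-1}) > 1, and suppose ‖P − P'‖ < κ. Then K(P', δ) ⊆ K(P, 1), i.e. every u ∈ 𝔛 with ‖P'u‖ ≥ δ^{-1}‖Q'u‖ satisfies ‖Pu‖ ≥ ‖Qu‖. -/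
open Filter Topology

noncomputable section

/-- **Cone comparison lemma.**  Let `P, P'` be bounded operators on a Banach space with
complementary operators `Q = I − P`, `Q' = I − P'`.  If `δ ∈ (0,1)` and `κ > 0` satisfy
`δ⁻¹ − 2κ(1 + δ⁻¹) > 1` and `‖P − P'‖ < κ`, then the cone
`K(P', δ) = {u : ‖P'u‖ ≥ δ⁻¹‖Q'u‖}` is contained in the cone `K(P, 1) = {u : ‖Pu‖ ≥ ‖Qu‖}`. -/
theorem cone_inclusion {𝕏 : Type*} [NormedAddCommGroup 𝕏] [NormedSpace ℝ 𝕏] [CompleteSpace 𝕏]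
    (P P' : 𝕏 →L[ℝ] 𝕏) (δ κ : ℝ) (hδ0 : 0 < δ) (hδ1 : δ < 1) (hκ : 0 < κ)
    (hgap : 1 < δ⁻¹ - 2 * κ * (1 + δ⁻¹)) (hPP' : ‖P - P'‖ < κ) :
    ∀ u : 𝕏, δ⁻¹ * ‖(1 - P') u‖ ≤ ‖P' u‖ → ‖(1 - P) u‖ ≤ ‖P u‖ := by
  intro u hu
  have hinv : δ * δ⁻¹ = 1 := mul_inv_cancel₀ hδ0.ne'
  set a := ‖P' u‖ with ha
  have ha0 : 0 ≤ a := norm_nonneg _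
  have hQ' : ‖(1 - P') u‖ ≤ δ * a := by
    nlinarith [norm_nonneg ((1 - P') u)]
  have hu_norm : ‖u‖ ≤ (1 + δ) * a := by
    have h : u = P' u + (1 - P') u := by simp
    calc ‖u‖ = ‖P' u + (1 - P') u‖ := by rw [← h]
      _ ≤ ‖P' u‖ + ‖(1 - P') u‖ := norm_add_le _ _
      _ ≤ (1 + δ) * a := by nlinarith
  have hdiff : ‖(P - P') u‖ ≤ κ * ((1 + δ) * a) := by
    calc ‖(P - P') u‖ ≤ ‖P - P'‖ * ‖u‖ := (P - P').le_opNorm u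
      _ ≤ κ * ((1 + δ) * a) :=
        mul_le_mul hPP'.le hu_norm (norm_nonneg u) hκ.le
  have hdiff' : ‖(P' - P) u‖ = ‖(P - P') u‖ := by
    rw [← norm_neg]; congr 1; simp
  have hPu : a - κ * ((1 + δ) * a) ≤ ‖P u‖ := by
    have h : P' u = P u + (P' - P) u := by simp
    have h2 : ‖P' u‖ ≤ ‖P u‖ + ‖(P' - P) u‖ := by
      rw [h]; exact norm_add_le _ _
    rw [hdiff'] at h2
    linarith
  have hQu : ‖(1 - P) u‖ ≤ δ * a + κ * ((1 + δ) * a) := by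
    have h : (1 - P) u = (1 - P') u + (P' - P) u := by simp
    have h2 : ‖(1 - P) u‖ ≤ ‖(1 - P') u‖ + ‖(P' - P) u‖ := by
      rw [h]; exact norm_add_le _ _
    rw [hdiff'] at h2
    linarith
  have hcoef : δ + 2 * κ * (1 + δ) ≤ 1 := by nlinarith
  nlinarith
end
end
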